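/- Let ĝ = (g⊕h, [·,·]_{(l,r,ω)}) be a non-abelian extension of a Leibniz algebra g by h satisfying Z(h) = Z(ĝ) ∩ h. Then f₀(x) = (l_x, r_x), f₁ = 0, f₂(x,y) = ω(x,y) defines a Leibniz 2-algebra morphism from g (as a trivial 2-algebra 0 → g) to the strict Leibniz 2-algebra (h, Ξ(h), (ad^L, ad^R), l₂). Conversely, any such morphism (f₀, f₁, f₂) yields a non-abelian extension (g⊕h, [·,·]_{(l,r,ω)}) with Z(h) = Z(ĝ) ∩ h, where l_x = Pr_L f₀(x), r_x = Pr_R f₀(x), ω = f₂. -/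

import Mathlib

/-!
The Leibniz identity for the extension bracket is trilinear, so it holds on `g × h` as soon as
it holds on triples of elements of the form `(x, 0)` or `(0, α)`. On the eight kinds of such
triples it reads: the Leibniz identities of `g` and `h`, the coherence identity for `ω`, the two
identities `l₂(f₀ x, f₀ y) - f₀ [x, y] = ad ω(x, y)`, the derivation properties of `l_x` and
`r_x`, and finally `[l_y α + r_y α, ·] = 0` and `r_z (l_y α + r_y α) = 0`. Since
`(0, α)` is central in `ĝ` iff `α ∈ Z(h)` and every `r_y` kills `α`, the condition
`Z(h) = Z(ĝ) ∩ h` says exactly that each `r_y` vanishes on `Z(h)`, which makes the last identity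
a consequence of the previous one.
-/


variable {K : Type*} [Field K]
  {g : Type*} [AddCommGroup g] [Module K g]
  {h : Type*} [AddCommGroup h] [Module K h]

/-- The extension bracket on `g ⊕ h` determined by `(l, r, ω)`. -/
def extBracket (Bg : g →ₗ[K] g →ₗ[K] g) (Bh : h →ₗ[K] h →ₗ[K] h)
    (l r : g →ₗ[K] Module.End K h) (ω : g →ₗ[K] g →ₗ[K] h)
    (u v : g × h) : g × h :=
  (Bg u.1 v.1, ω u.1 v.1 + l u.1 v.2 + r v.1 u.2 + Bh u.2 v.2)

/-- Membership in `Ξ(h)`. -/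
def InXi (Bh : h →ₗ[K] h →ₗ[K] h) (DL DR : Module.End K h) : Prop :=
  (∀ a b : h, DL (Bh a b) = Bh (DL a) b + Bh a (DL b)) ∧
  (∀ a b : h, DR (Bh a b) = Bh a (DR b) - Bh b (DR a)) ∧
  (∀ α β : h, Bh (DL α + DR α) β = 0) ∧
  (∀ α : h, (∀ β : h, Bh α β = 0) → DR α = 0)

section LeibnizOnProd

open LinearMap

variable {R A C : Type*} [CommRing R] [AddCommGroup A] [Module R A] [AddCommGroup C] [Module R C]

theorem LinearMap.leibniz_of_inl_inr (B : A × C →ₗ[R] A × C →ₗ[R] A × C)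
    (H : ∀ u ∈ Set.range (inl R A C) ∪ Set.range (inr R A C),
      ∀ v ∈ Set.range (inl R A C) ∪ Set.range (inr R A C),
      ∀ w ∈ Set.range (inl R A C) ∪ Set.range (inr R A C),
      B u (B v w) = B (B u v) w + B v (B u w))
    (u v w : A × C) : B u (B v w) = B (B u v) w + B v (B u w) := by
  have hl (x : A) : (x, (0 : C)) ∈ Set.range (inl R A C) ∪ Set.range (inr R A C) :=
    Or.inl ⟨x, rfl⟩
  have hr (c : C) : ((0 : A), c) ∈ Set.range (inl R A C) ∪ Set.range (inr R A C) :=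
    Or.inr ⟨c, rfl⟩
  rw [← Prod.fst_add_snd u, ← Prod.fst_add_snd v, ← Prod.fst_add_snd w]
  simp only [map_add, add_apply]
  linear_combination (norm := module)
    H _ (hl u.1) _ (hl v.1) _ (hl w.1) + H _ (hl u.1) _ (hl v.1) _ (hr w.2) +
    H _ (hl u.1) _ (hr v.2) _ (hl w.1) + H _ (hl u.1) _ (hr v.2) _ (hr w.2) +
    H _ (hr u.2) _ (hl v.1) _ (hl w.1) + H _ (hr u.2) _ (hl v.1) _ (hr w.2) +
    H _ (hr u.2) _ (hr v.2) _ (hl w.1) + H _ (hr u.2) _ (hr v.2) _ (hr w.2)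

end LeibnizOnProd

section ExtensionBracket

variable (Bg : g →ₗ[K] g →ₗ[K] g) (Bh : h →ₗ[K] h →ₗ[K] h)
  (l r : g →ₗ[K] Module.End K h) (ω : g →ₗ[K] g →ₗ[K] h)

local notation "⁅" u ", " v "⁆ₑ" => extBracket Bg Bh l r ω u v

def extBracketₗ : g × h →ₗ[K] g × h →ₗ[K] g × h :=
  LinearMap.mk₂ K (extBracket Bg Bh l r ω)
    (fun _ _ _ => by simp only [extBracket, Prod.fst_add, Prod.snd_add, map_add,
      LinearMap.add_apply, Prod.mk_add_mk, Prod.mk.injEq, true_and]; abel)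
    (fun _ _ _ => by simp [extBracket])
    (fun _ _ _ => by simp only [extBracket, Prod.fst_add, Prod.snd_add, map_add,
      LinearMap.add_apply, Prod.mk_add_mk, Prod.mk.injEq, true_and]; abel)
    (fun _ _ _ => by simp [extBracket])

@[simp]
theorem extBracketₗ_apply (u v : g × h) : extBracketₗ Bg Bh l r ω u v = ⁅u, v⁆ₑ := rfl

variable {Bg Bh l r ω}

theorem extBracket_leibniz_inl_inl_inl_iff (x y z : g) :
    ⁅(x, 0), ⁅(y, 0), (z, 0)⁆ₑ⁆ₑ =
        ⁅⁅(x, 0), (y, 0)⁆ₑ, (z, 0)⁆ₑ + ⁅(y, (0 : h)), ⁅(x, 0), (z, 0)⁆ₑ⁆ₑ ↔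
      Bg x (Bg y z) = Bg (Bg x y) z + Bg y (Bg x z) ∧
      l x (ω y z) - l y (ω x z) - r z (ω x y) = ω (Bg x y) z - ω x (Bg y z) + ω y (Bg x z) := by
  simp only [extBracket, map_zero, LinearMap.zero_apply, add_zero, Prod.mk_add_mk, Prod.mk.injEq]
  refine and_congr_right fun _ => ⟨fun e => ?_, fun e => ?_⟩ <;>
    linear_combination (norm := module) e

theorem extBracket_leibniz_inl_inl_inr_iff (x y : g) (α : h) :
    ⁅(x, 0), ⁅(y, 0), (0, α)⁆ₑ⁆ₑ =
        ⁅⁅(x, 0), (y, 0)⁆ₑ, (0, α)⁆ₑ + ⁅(y, 0), ⁅(x, 0), (0, α)⁆ₑ⁆ₑ ↔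
      l x (l y α) - l y (l x α) - l (Bg x y) α = Bh (ω x y) α := by
  simp only [extBracket, map_zero, LinearMap.zero_apply, add_zero, zero_add, Prod.mk_add_mk,
    Prod.mk.injEq, true_and]
  constructor <;> intro e <;> linear_combination (norm := module) e

theorem extBracket_leibniz_inl_inr_inl_iff (x y : g) (α : h) :
    ⁅(x, 0), ⁅(0, α), (y, 0)⁆ₑ⁆ₑ =
        ⁅⁅(x, 0), (0, α)⁆ₑ, (y, 0)⁆ₑ + ⁅(0, α), ⁅(x, 0), (y, 0)⁆ₑ⁆ₑ ↔
      l x (r y α) - r y (l x α) - r (Bg x y) α = Bh α (ω x y) := by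
  simp only [extBracket, map_zero, LinearMap.zero_apply, add_zero, zero_add, Prod.mk_add_mk,
    Prod.mk.injEq, true_and]
  constructor <;> intro e <;> linear_combination (norm := module) e

theorem extBracket_leibniz_inr_inl_inl_iff (y z : g) (α : h)
    (hlr : l y (r z α) - r z (l y α) - r (Bg y z) α = Bh α (ω y z)) :
    ⁅(0, α), ⁅(y, 0), (z, 0)⁆ₑ⁆ₑ =
        ⁅⁅(0, α), (y, 0)⁆ₑ, (z, 0)⁆ₑ + ⁅(y, 0), ⁅(0, α), (z, 0)⁆ₑ⁆ₑ ↔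
      r z (l y α + r y α) = 0 := by
  simp only [extBracket, map_zero, map_add, LinearMap.zero_apply, add_zero, zero_add,
    Prod.mk_add_mk, Prod.mk.injEq, true_and]
  constructor <;> intro e <;> linear_combination (norm := module) -e - hlr

theorem extBracket_leibniz_inl_inr_inr_iff (x : g) (a b : h) :
    ⁅(x, 0), ⁅(0, a), (0, b)⁆ₑ⁆ₑ =
        ⁅⁅(x, 0), (0, a)⁆ₑ, (0, b)⁆ₑ + ⁅(0, a), ⁅(x, 0), (0, b)⁆ₑ⁆ₑ ↔
      l x (Bh a b) = Bh (l x a) b + Bh a (l x b) := by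
  simp only [extBracket, map_zero, LinearMap.zero_apply, add_zero, zero_add, Prod.mk_add_mk,
    Prod.mk.injEq, true_and]

theorem extBracket_leibniz_inr_inl_inr_iff (y : g) (a b : h)
    (hl : l y (Bh a b) = Bh (l y a) b + Bh a (l y b)) :
    ⁅(0, a), ⁅(y, 0), (0, b)⁆ₑ⁆ₑ =
        ⁅⁅(0, a), (y, 0)⁆ₑ, (0, b)⁆ₑ + ⁅(y, 0), ⁅(0, a), (0, b)⁆ₑ⁆ₑ ↔
      Bh (l y a + r y a) b = 0 := by
  simp only [extBracket, map_zero, map_add, LinearMap.zero_apply, LinearMap.add_apply, add_zero,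
    zero_add, Prod.mk_add_mk, Prod.mk.injEq, true_and]
  constructor <;> intro e <;> linear_combination (norm := module) -e - hl

theorem extBracket_leibniz_inr_inr_inl_iff (x : g) (a b : h) :
    ⁅(0, a), ⁅(0, b), (x, 0)⁆ₑ⁆ₑ =
        ⁅⁅(0, a), (0, b)⁆ₑ, (x, 0)⁆ₑ + ⁅(0, b), ⁅(0, a), (x, 0)⁆ₑ⁆ₑ ↔
      r x (Bh a b) = Bh a (r x b) - Bh b (r x a) := by
  simp only [extBracket, map_zero, LinearMap.zero_apply, add_zero, zero_add, Prod.mk_add_mk,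
    Prod.mk.injEq, true_and]
  constructor <;> intro e <;> linear_combination (norm := module) -e

theorem extBracket_leibniz_inr_inr_inr_iff (a b c : h) :
    ⁅((0 : g), a), ⁅(0, b), (0, c)⁆ₑ⁆ₑ =
        ⁅⁅(0, a), (0, b)⁆ₑ, (0, c)⁆ₑ + ⁅(0, b), ⁅(0, a), (0, c)⁆ₑ⁆ₑ ↔
      Bh a (Bh b c) = Bh (Bh a b) c + Bh b (Bh a c) := by
  simp only [extBracket, map_zero, LinearMap.zero_apply, add_zero, zero_add, Prod.mk_add_mk,
    Prod.mk.injEq, true_and]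

theorem extBracket_inr_left_eq_zero_iff (α : h) :
    (∀ v, ⁅((0 : g), α), v⁆ₑ = 0) ↔ (∀ β, Bh α β = 0) ∧ ∀ y, r y α = 0 := by
  simp only [Prod.forall, extBracket, map_zero, LinearMap.zero_apply, zero_add, Prod.ext_iff,
    Prod.fst_zero, Prod.snd_zero, true_and]
  refine ⟨fun H => ⟨fun β => by simpa using H 0 β, fun y => by simpa using H y 0⟩,
    fun ⟨hB, hr⟩ y b => by simp [hB, hr]⟩

theorem leftCenter_eq_inter_iff_r_vanishes :
    (∀ α : h, (∀ β, Bh α β = 0) ↔ ∀ v, ⁅((0 : g), α), v⁆ₑ = 0) ↔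
      ∀ α : h, (∀ β, Bh α β = 0) → ∀ y, r y α = 0 := by
  simp_rw [extBracket_inr_left_eq_zero_iff, iff_self_and]

end ExtensionBracket

/-- Theorem 3.13: `(g ⊕ h, [·,·]_{(l,r,ω)})` is a non-abelian extension of `g`
by `h` with `Z(h) = Z(ĝ) ∩ h` if and only if `f₀(x) = (l_x, r_x)`, `f₁ = 0`,
`f₂ = ω` is a Leibniz 2-algebra morphism from `g` to the strict Leibniz
2-algebra `(h, Ξ(h), (ad^L, ad^R), l₂)`: namely `f₀` takes values in `Ξ(h)`,
`l₂(f₀ x, f₀ y) - f₀ [x,y]_g = (ad^L, ad^R)(f₂(x,y))`, and `f₂` satisfies the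
morphism coherence identity (with `l₃ = 0` on both sides). -/
theorem extension_with_center_condition_iff_morphism
    (Bg : g →ₗ[K] g →ₗ[K] g)
    (hg : ∀ x y z : g, Bg x (Bg y z) = Bg (Bg x y) z + Bg y (Bg x z))
    (Bh : h →ₗ[K] h →ₗ[K] h)
    (hh : ∀ a b c : h, Bh a (Bh b c) = Bh (Bh a b) c + Bh b (Bh a c))
    (l r : g →ₗ[K] Module.End K h) (ω : g →ₗ[K] g →ₗ[K] h) :
    -- extension side: the bracket is Leibniz and Z(h) = Z(ĝ) ∩ h
    ((∀ u v w : g × h,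
        extBracket Bg Bh l r ω u (extBracket Bg Bh l r ω v w) =
          extBracket Bg Bh l r ω (extBracket Bg Bh l r ω u v) w +
            extBracket Bg Bh l r ω v (extBracket Bg Bh l r ω u w)) ∧
     (∀ α : h, (∀ β : h, Bh α β = 0) ↔
        (∀ v : g × h, extBracket Bg Bh l r ω ((0 : g), α) v = 0)))
    ↔
    -- morphism side
    ((∀ x : g, InXi Bh (l x) (r x)) ∧
     (∀ (x y : g) (α : h),
        l x (l y α) - l y (l x α) - l (Bg x y) α = Bh (ω x y) α) ∧
     (∀ (x y : g) (α : h),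
        l x (r y α) - r y (l x α) - r (Bg x y) α = Bh α (ω x y)) ∧
     (∀ x y z : g,
        l x (ω y z) - l y (ω x z) - r z (ω x y) =
          ω (Bg x y) z - ω x (Bg y z) + ω y (Bg x z))) := by
  rw [leftCenter_eq_inter_iff_r_vanishes]
  constructor
  · rintro ⟨hleib, hcenter⟩
    have hderiv x a b := (extBracket_leibniz_inl_inr_inr_iff x a b).1 (hleib _ _ _)
    refine ⟨fun x => ⟨hderiv x, fun a b => ?_, fun a b => ?_, fun α hα => hcenter α hα x⟩,
      fun x y α => ?_, fun x y α => ?_, fun x y z => ?_⟩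
    · exact (extBracket_leibniz_inr_inr_inl_iff x a b).1 (hleib _ _ _)
    · exact (extBracket_leibniz_inr_inl_inr_iff x a b (hderiv x a b)).1 (hleib _ _ _)
    · exact (extBracket_leibniz_inl_inl_inr_iff x y α).1 (hleib _ _ _)
    · exact (extBracket_leibniz_inl_inr_inl_iff x y α).1 (hleib _ _ _)
    · exact ((extBracket_leibniz_inl_inl_inl_iff x y z).1 (hleib _ _ _)).2
  · rintro ⟨hXi, hll, hlr, hω⟩
    refine ⟨LinearMap.leibniz_of_inl_inr (extBracketₗ Bg Bh l r ω) ?_,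
      fun α hα y => (hXi y).2.2.2 α hα⟩
    rintro _ (⟨x, rfl⟩ | ⟨a, rfl⟩) _ (⟨y, rfl⟩ | ⟨b, rfl⟩) _ (⟨z, rfl⟩ | ⟨c, rfl⟩)
    · exact (extBracket_leibniz_inl_inl_inl_iff x y z).2 ⟨hg x y z, hω x y z⟩
    · exact (extBracket_leibniz_inl_inl_inr_iff x y c).2 (hll x y c)
    · exact (extBracket_leibniz_inl_inr_inl_iff x z b).2 (hlr x z b)
    · exact (extBracket_leibniz_inl_inr_inr_iff x b c).2 ((hXi x).1 b c)
    · exact (extBracket_leibniz_inr_inl_inl_iff y z a (hlr y z a)).2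
        ((hXi z).2.2.2 _ ((hXi y).2.2.1 a))
    · exact (extBracket_leibniz_inr_inl_inr_iff y a c ((hXi y).1 a c)).2 ((hXi y).2.2.1 a c)
    · exact (extBracket_leibniz_inr_inr_inl_iff z a b).2 ((hXi z).2.1 a b)
    · exact (extBracket_leibniz_inr_inr_inr_iff a b c).2 (hh a b c)
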